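/- arXiv:1608.02767 — 2 statements merged into one kernel-verified Lean document; each statement's English description precedes it below -/
import Mathlib

section
/- Let H be a separable Hilbert space and Ψ = {ψ_j}_{j∈I} a countable family in H. The analysis operator T*_Ψ (the adjoint of the synthesis operator T_Ψ defined on finitely supported sequences by c ↦ Σ_j c_j ψ_j) maps span(Ψ) into ℓ²(I) if and only if for every j ∈ I the quantity t_j = Σ_{k∈I} |⟨ψ_j, ψ_k⟩|² is finite. -/
/-!
Square-summability of `k ↦ ⟪ψ k, φ⟫` is preserved under linear combinations of `φ`, so on
`span ψ` it reduces to the generators `φ = ψ j`. For such `φ`, Cauchy–Schwarz bounds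
`|⟪φ, ∑ c j • ψ j⟫| = |∑ c j ⟪φ, ψ j⟫|` by `‖c‖₂` times the `ℓ²` norm of the coefficients.
-/

open scoped InnerProductSpace

theorem memℓp_two_iff_summable_sq {α : Type*} {E : α → Type*} [∀ i, NormedAddCommGroup (E i)]
    (f : ∀ i, E i) : Memℓp f 2 ↔ Summable fun i => ‖f i‖ ^ 2 := by
  simpa using memℓp_gen_iff (p := 2) (f := f) (by norm_num)

section InnerProduct

variable {𝕜 E ι : Type*} [RCLike 𝕜] [NormedAddCommGroup E] [InnerProductSpace 𝕜 E]

theorem memℓp_inner_of_mem_span (ψ : ι → E) (h : ∀ j, Memℓp (fun k => ⟪ψ k, ψ j⟫_𝕜) 2)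
    {φ : E} (hφ : φ ∈ Submodule.span 𝕜 (Set.range ψ)) : Memℓp (fun k => ⟪ψ k, φ⟫_𝕜) 2 := by
  induction hφ using Submodule.span_induction with
  | mem x hx =>
    obtain ⟨j, rfl⟩ := hx
    exact h j
  | zero =>
    simp only [inner_zero_right]
    exact zero_memℓp
  | add x y _ _ hx hy =>
    simp only [inner_add_right]
    exact hx.add hy
  | smul a x _ hx =>
    simp only [inner_smul_right]
    exact hx.const_smul a

theorem inner_finsuppSum_smul (φ : E) (ψ : ι → E) (c : ι →₀ 𝕜) :
    ⟪φ, c.sum fun j a => a • ψ j⟫_𝕜 = ∑ j ∈ c.support, c j * ⟪φ, ψ j⟫_𝕜 := by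
  simp only [Finsupp.sum, inner_sum, inner_smul_right]

theorem norm_inner_finsuppSum_smul_le (ψ : ι → E) {φ : E}
    (hφ : Summable fun j => ‖⟪ψ j, φ⟫_𝕜‖ ^ 2) (c : ι →₀ 𝕜) :
    ‖⟪φ, c.sum fun j a => a • ψ j⟫_𝕜‖ ≤
      √(∑' j, ‖⟪ψ j, φ⟫_𝕜‖ ^ 2) * √(∑ j ∈ c.support, ‖c j‖ ^ 2) := by
  rw [inner_finsuppSum_smul, mul_comm]
  calc ‖∑ j ∈ c.support, c j * ⟪φ, ψ j⟫_𝕜‖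
      ≤ ∑ j ∈ c.support, ‖c j‖ * ‖⟪ψ j, φ⟫_𝕜‖ := by
        refine (norm_sum_le _ _).trans_eq (Finset.sum_congr rfl fun j _ => ?_)
        rw [norm_mul, norm_inner_symm]
    _ ≤ √(∑ j ∈ c.support, ‖c j‖ ^ 2) * √(∑ j ∈ c.support, ‖⟪ψ j, φ⟫_𝕜‖ ^ 2) :=
        Real.sum_mul_le_sqrt_mul_sqrt _ _ _
    _ ≤ √(∑ j ∈ c.support, ‖c j‖ ^ 2) * √(∑' j, ‖⟪ψ j, φ⟫_𝕜‖ ^ 2) := by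
        gcongr
        exact hφ.sum_le_tsum _ fun j _ => by positivity

end InnerProduct

theorem stmt_0_general {H : Type*} [NormedAddCommGroup H] [InnerProductSpace ℂ H]
    {I : Type*} (ψ : I → H) :
    ((∀ φ ∈ Submodule.span ℂ (Set.range ψ),
        (∃ C : ℝ, ∀ c : I →₀ ℂ,
          ‖(inner ℂ φ (c.sum fun j a => a • ψ j) : ℂ)‖ ≤
            C * Real.sqrt (∑ j ∈ c.support, ‖c j‖ ^ 2)) ∧
        Memℓp (fun j => (inner ℂ (ψ j) φ : ℂ)) 2)
      ↔ ∀ j : I, Summable fun k => ‖(inner ℂ (ψ k) (ψ j) : ℂ)‖ ^ 2) := by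
  simp only [← memℓp_two_iff_summable_sq]
  constructor
  · intro h j
    exact (h (ψ j) (Submodule.subset_span ⟨j, rfl⟩)).2
  · intro ht φ hφ
    have hmem := memℓp_inner_of_mem_span ψ ht hφ
    exact ⟨⟨_, norm_inner_finsuppSum_smul_le ψ ((memℓp_two_iff_summable_sq _).1 hmem)⟩, hmem⟩

/-- The analysis operator `T*_Ψ` (adjoint of the synthesis operator
`T_Ψ : ℓ₀(I) → H`, `c ↦ ∑ j, c j • ψ j`) maps `span Ψ` into `ℓ²(I)` — i.e. every
`φ ∈ span Ψ` lies in `Dom T*_Ψ` (the functional `c ↦ ⟨T_Ψ c, φ⟩` is bounded on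
finitely supported sequences with the `ℓ²` norm, so that `T*_Ψ φ = {⟨φ, ψ_j⟩}_j ∈ ℓ²`)
— if and only if `t_j = ∑_k |⟨ψ_j, ψ_k⟩|² < ∞` for every `j`.
(Here the paper's inner product `⟨x, y⟩`, linear in `x`, is Mathlib's `⟪y, x⟫`.) -/
theorem stmt_0 {H : Type*} [NormedAddCommGroup H] [InnerProductSpace ℂ H]
    [CompleteSpace H] [SecondCountableTopology H]
    {I : Type*} [Countable I] (ψ : I → H) :
    ((∀ φ ∈ Submodule.span ℂ (Set.range ψ),
        (∃ C : ℝ, ∀ c : I →₀ ℂ,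
          ‖(inner ℂ φ (c.sum fun j a => a • ψ j) : ℂ)‖ ≤
            C * Real.sqrt (∑ j ∈ c.support, ‖c j‖ ^ 2)) ∧
        Memℓp (fun j => (inner ℂ (ψ j) φ : ℂ)) 2)
      ↔ ∀ j : I, Summable fun k => ‖(inner ℂ (ψ k) (ψ j) : ℂ)‖ ^ 2) :=
  stmt_0_general ψ
end

section
/- Let H₁, H₂ be separable Hilbert spaces, K : H₁ → H₂ a bounded linear operator, K* its adjoint, G = K*K and F = KK*, and fix 0 < A ≤ B < ∞. Then A·P_{cl(Ran K)} ≤ F ≤ B·P_{cl(Ran K)} on H₂ if and only if A·G ≤ G² ≤ B·G on H₁. -/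
/-!
All three quadratic forms are squared norms: `⟪F y, y⟫ = ‖K* y‖²`, `⟪G x, x⟫ = ‖K x‖²` and
`⟪G² x, x⟫ = ‖K* K x‖²`. Since `K*` vanishes on `(Ran K)ᗮ`, `K* y = K* (P y)`, so the left-hand
side says `A ‖z‖² ≤ ‖K* z‖² ≤ B ‖z‖²` for every `z ∈ cl(Ran K)`. This closed condition holds on
`cl(Ran K)` iff it holds on `Ran K`, i.e. for `z = K x`, which is the right-hand side.
-/

open ContinuousLinearMap

section

variable {𝕜 E F : Type*} [RCLike 𝕜] [NormedAddCommGroup E] [InnerProductSpace 𝕜 E]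
  [NormedAddCommGroup F] [InnerProductSpace 𝕜 F]

theorem Submodule.forall_starProjection_iff (V : Submodule 𝕜 E) [V.HasOrthogonalProjection]
    (p : E → Prop) : (∀ y, p (V.starProjection y)) ↔ ∀ z ∈ V, p z :=
  ⟨fun h z hz => Submodule.starProjection_eq_self_iff.mpr hz ▸ h z,
    fun h y => h _ (V.starProjection_apply_mem y)⟩

theorem Submodule.forall_mem_topologicalClosure_iff (V : Submodule 𝕜 E) {p : E → Prop}
    (hp : IsClosed {z | p z}) : (∀ z ∈ V.topologicalClosure, p z) ↔ ∀ z ∈ V, p z := by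
  refine ⟨fun h z hz => h z (V.le_topologicalClosure hz), fun h z hz => ?_⟩
  rw [← SetLike.mem_coe, V.topologicalClosure_coe] at hz
  exact hp.closure_subset_iff.mpr h hz

theorem ContinuousLinearMap.isClosed_setOf_norm_sq_bounds (T : E →L[𝕜] F) (A B : ℝ) :
    IsClosed {z | A * ‖z‖ ^ 2 ≤ ‖T z‖ ^ 2 ∧ ‖T z‖ ^ 2 ≤ B * ‖z‖ ^ 2} := by
  have hT : Continuous fun z => ‖T z‖ ^ 2 := by fun_prop
  exact (isClosed_le (by fun_prop) hT).inter (isClosed_le hT (by fun_prop))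

variable [CompleteSpace E] [CompleteSpace F]

theorem ContinuousLinearMap.adjoint_starProjection_closure_range (T : E →L[𝕜] F) (y : F) :
    adjoint T ((LinearMap.range (T : E →ₗ[𝕜] F)).topologicalClosure.starProjection y) =
      adjoint T y := by
  set V := (LinearMap.range (T : E →ₗ[𝕜] F)).topologicalClosure
  have hy : y - V.starProjection y ∈ (adjoint T : F →ₗ[𝕜] E).ker := by
    rw [← T.orthogonal_range, ← Submodule.orthogonal_closure]
    exact Submodule.sub_starProjection_mem_orthogonal y
  rw [LinearMap.mem_ker, map_sub, sub_eq_zero] at hy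
  exact hy.symm

theorem ContinuousLinearMap.re_inner_adjoint_comp_self_sq_apply_self (T : E →L[𝕜] F) (x : E) :
    RCLike.re (inner 𝕜 ((adjoint T ∘L T) ((adjoint T ∘L T) x)) x) =
      ‖(adjoint T ∘L T) x‖ ^ 2 := by
  rw [comp_apply (adjoint T), adjoint_inner_left, ← adjoint_inner_right, ← comp_apply,
    inner_self_eq_norm_sq]

end

theorem stmt_5_general {H₁ H₂ : Type*} [NormedAddCommGroup H₁] [InnerProductSpace ℂ H₁]
    [CompleteSpace H₁]
    [NormedAddCommGroup H₂] [InnerProductSpace ℂ H₂]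
    [CompleteSpace H₂]
    (K : H₁ →L[ℂ] H₂) (A B : ℝ) :
    (∀ y : H₂,
        A * ‖(Submodule.orthogonalProjectionOnto (LinearMap.range (K : H₁ →ₗ[ℂ] H₂)).topologicalClosure y : H₂)‖ ^ 2 ≤
          (inner ℂ ((K ∘L adjoint K) y) y : ℂ).re ∧
        (inner ℂ ((K ∘L adjoint K) y) y : ℂ).re ≤
          B * ‖(Submodule.orthogonalProjectionOnto (LinearMap.range (K : H₁ →ₗ[ℂ] H₂)).topologicalClosure y : H₂)‖ ^ 2)
    ↔ (∀ x : H₁,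
        A * (inner ℂ ((adjoint K ∘L K) x) x : ℂ).re ≤
          (inner ℂ ((adjoint K ∘L K) ((adjoint K ∘L K) x)) x : ℂ).re ∧
        (inner ℂ ((adjoint K ∘L K) ((adjoint K ∘L K) x)) x : ℂ).re ≤
          B * (inner ℂ ((adjoint K ∘L K) x) x : ℂ).re) := by
  set V := (LinearMap.range (K : H₁ →ₗ[ℂ] H₂)).topologicalClosure
  have hF (y : H₂) :
      (inner ℂ ((K ∘L adjoint K) y) y : ℂ).re = ‖adjoint K (V.starProjection y)‖ ^ 2 := by
    rw [K.adjoint_starProjection_closure_range, apply_norm_sq_eq_inner_adjoint_left,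
      adjoint_adjoint]
    rfl
  let p : H₂ → Prop := fun z => A * ‖z‖ ^ 2 ≤ ‖adjoint K z‖ ^ 2 ∧ ‖adjoint K z‖ ^ 2 ≤ B * ‖z‖ ^ 2
  calc _ ↔ ∀ y, p (V.starProjection y) := by simp_rw [hF]; rfl
    _ ↔ ∀ z ∈ V, p z := V.forall_starProjection_iff p
    _ ↔ ∀ z ∈ LinearMap.range (K : H₁ →ₗ[ℂ] H₂), p z :=
      Submodule.forall_mem_topologicalClosure_iff _ (isClosed_setOf_norm_sq_bounds _ A B)
    _ ↔ ∀ x, p (K x) := by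
      simp only [LinearMap.mem_range, forall_exists_index, forall_apply_eq_imp_iff]
      rfl
    _ ↔ _ := forall_congr' fun x => by
      simp_rw [← RCLike.re_to_complex, re_inner_adjoint_comp_self_sq_apply_self,
        ← apply_norm_sq_eq_inner_adjoint_left]
      rfl

/-- for a bounded operator `K : H₁ → H₂` with `G = K*K`, `F = KK*`
and `0 < A ≤ B < ∞`: `A·P_{cl(Ran K)} ≤ F ≤ B·P_{cl(Ran K)}` on `H₂` iff
`A·G ≤ G² ≤ B·G` on `H₁` (operator inequalities expressed via quadratic forms,
using `⟨P y, y⟩ = ‖P y‖²` for the orthogonal projection `P`). -/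
theorem stmt_5 {H₁ H₂ : Type*} [NormedAddCommGroup H₁] [InnerProductSpace ℂ H₁]
    [CompleteSpace H₁] [SecondCountableTopology H₁]
    [NormedAddCommGroup H₂] [InnerProductSpace ℂ H₂]
    [CompleteSpace H₂] [SecondCountableTopology H₂]
    (K : H₁ →L[ℂ] H₂) (A B : ℝ) (hA : 0 < A) (hAB : A ≤ B) :
    (∀ y : H₂,
        A * ‖(Submodule.orthogonalProjectionOnto (LinearMap.range (K : H₁ →ₗ[ℂ] H₂)).topologicalClosure y : H₂)‖ ^ 2 ≤
          (inner ℂ ((K ∘L adjoint K) y) y : ℂ).re ∧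
        (inner ℂ ((K ∘L adjoint K) y) y : ℂ).re ≤
          B * ‖(Submodule.orthogonalProjectionOnto (LinearMap.range (K : H₁ →ₗ[ℂ] H₂)).topologicalClosure y : H₂)‖ ^ 2)
    ↔ (∀ x : H₁,
        A * (inner ℂ ((adjoint K ∘L K) x) x : ℂ).re ≤
          (inner ℂ ((adjoint K ∘L K) ((adjoint K ∘L K) x)) x : ℂ).re ∧
        (inner ℂ ((adjoint K ∘L K) ((adjoint K ∘L K) x)) x : ℂ).re ≤
          B * (inner ℂ ((adjoint K ∘L K) x) x : ℂ).re) :=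
  stmt_5_general K A B
end
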